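/- If R is an S-coherent ring, I is a finitely generated ideal of R, and a ∈ R, then the quotient ideal (I :_R a) is S-finite and the module (I + Ra)/I is S-finitely presented. -/

import Mathlib

open Function LinearMap

/-- A module `M` is `S`-finite: there is a f.g. submodule `N₀` and `s ∈ S` with `s • M ⊆ N₀`. -/
def SFiniteMod (R : Type*) [CommRing R] (S : Submonoid R)
    (M : Type*) [AddCommGroup M] [Module R M] : Prop :=
  ∃ N₀ : Submodule R M, N₀.FG ∧ ∃ s ∈ S, ∀ m : M, s • m ∈ N₀

/-- A module `M` is `S`-finitely presented: there is an exact sequence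
`0 → K → F → M → 0` with `F` finitely generated free and `K` `S`-finite. -/
def SFinitePres (R : Type*) [CommRing R] (S : Submonoid R)
    (M : Type*) [AddCommGroup M] [Module R M] : Prop :=
  ∃ (n : ℕ) (f : (Fin n → R) →ₗ[R] M), Function.Surjective f ∧
    ∃ K₀ : Submodule R (Fin n → R), K₀.FG ∧ K₀ ≤ LinearMap.ker f ∧
      ∃ s ∈ S, ∀ x ∈ LinearMap.ker f, s • x ∈ K₀

/-- An ideal `I` is `S`-finite. -/
def SFiniteIdeal (R : Type*) [CommRing R] (S : Submonoid R) (I : Ideal R) : Prop :=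
  ∃ J : Ideal R, J.FG ∧ J ≤ I ∧ ∃ s ∈ S, ∀ x ∈ I, s * x ∈ J

/-- `R` is an `S`-coherent ring: every finitely generated ideal is `S`-finitely presented. -/
def SCoherentRing (R : Type*) [CommRing R] (S : Submonoid R) : Prop :=
  ∀ I : Ideal R, I.FG → SFinitePres R S ↥I

/-- `M` is an `S`-coherent module: finitely generated and every finitely generated
submodule is `S`-finitely presented. -/
def SCoherentMod (R : Type*) [CommRing R] (S : Submonoid R)
    (M : Type*) [AddCommGroup M] [Module R M] : Prop :=
  Module.Finite R M ∧ ∀ N : Submodule R M, N.FG → SFinitePres R S ↥N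

/-!
Write `I = (v₁, …, vₘ)` and let `φ : Rᵐ × R → R`, `(c, r) ↦ ∑ cᵢ vᵢ + r a`. Its image `I + Ra` is
finitely generated, hence `S`-finitely presented, and a Schanuel-type comparison of presentations
(lifting maps between projective modules) shows that `ker φ` itself is `S`-finite. The colon ideal
`(I :_R a)` is the projection of `ker φ` to the last coordinate, so it is `S`-finite. Finally
`(I + Ra)/I` is cyclic, generated by the class of `a`, with annihilator `(I :_R a)`, so
`r ↦ r • ā` is a presentation with `S`-finite kernel.
-/

namespace Submodule

variable {R M N : Type*} [CommRing R] [AddCommGroup M] [Module R M] [AddCommGroup N] [Module R N]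
  {S : Submonoid R}

-- `SFiniteIdeal` and the kernel condition in `SFinitePres` unfold to instances of this.
def IsSFinite (S : Submonoid R) (P : Submodule R M) : Prop :=
  ∃ K : Submodule R M, K.FG ∧ K ≤ P ∧ ∃ s ∈ S, ∀ x ∈ P, s • x ∈ K

theorem FG.isSFinite {P : Submodule R M} (hP : P.FG) : P.IsSFinite S :=
  ⟨P, hP, le_rfl, 1, S.one_mem, fun x hx => by rwa [one_smul]⟩

theorem IsSFinite.sup {P Q : Submodule R M} (hP : P.IsSFinite S) (hQ : Q.IsSFinite S) :
    (P ⊔ Q).IsSFinite S := by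
  obtain ⟨K, hKfg, hKP, s, hs, hsK⟩ := hP
  obtain ⟨L, hLfg, hLQ, t, ht, htL⟩ := hQ
  refine ⟨K ⊔ L, hKfg.sup hLfg, sup_le_sup hKP hLQ, s * t, S.mul_mem hs ht, fun x hx => ?_⟩
  obtain ⟨y, hy, z, hz, rfl⟩ := mem_sup.mp hx
  rw [smul_add, mul_comm, mul_smul, mul_comm, mul_smul]
  exact add_mem_sup (K.smul_mem t (hsK y hy)) (L.smul_mem s (htL z hz))

theorem IsSFinite.map {P : Submodule R M} (hP : P.IsSFinite S) (f : M →ₗ[R] N) :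
    (P.map f).IsSFinite S := by
  obtain ⟨K, hKfg, hKP, s, hs, hsK⟩ := hP
  refine ⟨K.map f, hKfg.map f, map_mono hKP, s, hs, ?_⟩
  rintro _ ⟨x, hx, rfl⟩
  exact ⟨s • x, hsK x hx, map_smul f s x⟩

end Submodule

namespace LinearMap

variable {R F G M : Type*} [CommRing R] [AddCommGroup F] [Module R F] [AddCommGroup G] [Module R G]
  [AddCommGroup M] [Module R M]

theorem ker_eq_range_sub_sup_map_ker {f : F →ₗ[R] M} {g : G →ₗ[R] M} {h : F →ₗ[R] G}
    {u : G →ₗ[R] F} (hgh : g ∘ₗ h = f) (hfu : f ∘ₗ u = g) :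
    ker f = range (id - u ∘ₗ h) ⊔ (ker g).map u := by
  refine le_antisymm (fun x hx => ?_) (sup_le ?_ ?_)
  · have hhx : h x ∈ ker g := by rwa [mem_ker, ← comp_apply, hgh]
    rw [← sub_add_cancel x (u (h x))]
    exact Submodule.add_mem_sup ⟨x, rfl⟩ ⟨h x, hhx, rfl⟩
  · rintro _ ⟨x, rfl⟩
    have hfuh : f (u (h x)) = f x := by rw [← comp_apply f u, hfu, ← comp_apply g h, hgh]
    rw [mem_ker, sub_apply, id_apply, comp_apply, map_sub, hfuh, sub_self]
  · rintro _ ⟨y, hy, rfl⟩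
    rwa [mem_ker, ← comp_apply, hfu]

end LinearMap

section

variable {R : Type*} [CommRing R] {S : Submonoid R}

theorem SFinitePres.isSFinite_ker {M F : Type*} [AddCommGroup M] [Module R M] [AddCommGroup F]
    [Module R F] [Module.Finite R F] [Module.Projective R F] (hM : SFinitePres R S M)
    {f : F →ₗ[R] M} (hf : Surjective f) : (ker f).IsSFinite S := by
  obtain ⟨n, g, hg, hker⟩ := hM
  obtain ⟨h, hgh⟩ := Module.projective_lifting_property g f hg
  obtain ⟨u, hfu⟩ := Module.projective_lifting_property f g hf
  rw [ker_eq_range_sub_sup_map_ker hgh hfu, range_eq_map]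
  exact (Module.Finite.fg_top.map _).isSFinite.sup (Submodule.IsSFinite.map hker u)

theorem Ideal.colon_span_singleton_eq_map_snd_ker {F : Type*} [AddCommGroup F] [Module R F]
    (ψ : F →ₗ[R] R) (a : R) :
    (range ψ).colon (Ideal.span {a}) = (ker (ψ.coprod (toSpanSingleton R R a))).map (snd R F R) := by
  ext r
  rw [Ideal.mem_colon_span_singleton]
  constructor
  · rintro ⟨y, hy⟩
    refine ⟨(-y, r), ?_, rfl⟩
    rw [SetLike.mem_coe, mem_ker, coprod_apply, map_neg, hy, toSpanSingleton_apply, smul_eq_mul,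
      neg_add_cancel]
  · rintro ⟨⟨y, r⟩, hyr, rfl⟩
    refine ⟨-y, ?_⟩
    rw [SetLike.mem_coe, mem_ker, coprod_apply, toSpanSingleton_apply, smul_eq_mul] at hyr
    rw [map_neg, snd_apply]
    linear_combination -hyr

theorem Ideal.isSFinite_colon_span_singleton (hR : SCoherentRing R S) {I : Ideal R} (hI : I.FG)
    (a : R) : (I.colon (Ideal.span {a})).IsSFinite S := by
  obtain ⟨m, v, hv⟩ := Submodule.fg_iff_exists_fin_generating_family.mp hI
  set φ := (Fintype.linearCombination R v).coprod (toSpanSingleton R R a)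
  have hφ : (range φ).FG := range_eq_map φ ▸ Module.Finite.fg_top.map φ
  rw [← hv, ← Fintype.range_linearCombination, colon_span_singleton_eq_map_snd_ker,
    ← ker_rangeRestrict]
  exact ((hR _ hφ).isSFinite_ker φ.surjective_rangeRestrict).map _

theorem sFinitePres_span_singleton {M : Type*} [AddCommGroup M] [Module R M] {x : M}
    (hx : (ker (toSpanSingleton R M x)).IsSFinite S) : SFinitePres R S (R ∙ x) := by
  let f : R →ₗ[R] R ∙ x := (toSpanSingleton R M x).codRestrict (R ∙ x)
    fun r => Submodule.smul_mem _ r (Submodule.mem_span_singleton_self x)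
  have hf : Surjective f := by
    rintro ⟨y, hy⟩
    obtain ⟨r, rfl⟩ := Submodule.mem_span_singleton.mp hy
    exact ⟨r, rfl⟩
  have hker : ker f = ker (toSpanSingleton R M x) := ker_codRestrict _ _ _
  let e := LinearEquiv.funUnique (Fin 1) R R
  refine ⟨1, f ∘ₗ e.toLinearMap, hf.comp e.surjective, ?_⟩
  show (ker (f ∘ₗ e.toLinearMap)).IsSFinite S
  rw [ker_comp, hker, Submodule.comap_equiv_eq_map_symm]
  exact hx.map _

theorem Submodule.map_mkQ_sup_span_singleton {M : Type*} [AddCommGroup M] [Module R M]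
    (N : Submodule R M) (x : M) : (N ⊔ R ∙ x).map N.mkQ = R ∙ N.mkQ x := by
  rw [map_sup, mkQ_map_self, bot_sup_eq, map_span, Set.image_singleton]

theorem Submodule.ker_toSpanSingleton_mkQ {M : Type*} [AddCommGroup M] [Module R M]
    (N : Submodule R M) (x : M) : ker (toSpanSingleton R (M ⧸ N) (N.mkQ x)) = N.colon (R ∙ x) := by
  ext r
  rw [mem_ker, toSpanSingleton_apply, ← map_smul, mkQ_apply, Quotient.mk_eq_zero,
    mem_colon_span_singleton]

end

/-- If `R` is S-coherent, `I` a finitely generated ideal and `a ∈ R`, then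
`(I :_R a)` is S-finite and `(I + Ra)/I` is S-finitely presented. -/
theorem stmt17 {R : Type*} [CommRing R] (S : Submonoid R)
    (h : SCoherentRing R S) (I : Ideal R) (hI : I.FG) (a : R) :
    SFiniteIdeal R S (I.colon (Ideal.span {a})) ∧
    SFinitePres R S ↥(Submodule.map I.mkQ (I ⊔ Ideal.span {a})) := by
  have hcolon := Ideal.isSFinite_colon_span_singleton h hI a
  refine ⟨hcolon, ?_⟩
  rw [Ideal.span, Submodule.map_mkQ_sup_span_singleton]
  exact sFinitePres_span_singleton (by rwa [Submodule.ker_toSpanSingleton_mkQ])
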